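/- arXiv:1705.10273 — 4 statements merged into one kernel-verified Lean document; each statement's English description precedes it below -/
import Mathlib

section
/- Inverse-distribution-function sampling of the twisted arrival epochs: let H be uniformly distributed on [0,1), and define G(H) = (1/r) log( (e^{rt} − θ*/μ)^H (1 − θ*/μ)^{1−H} + θ*/μ ). Then G(H) takes values in [0,t] and for every u ∈ [0,t], P(G(H) ≤ u) = log( (μ e^{ru} − θ*)/(μ − θ*) ) / log( (μ e^{rt} − θ*)/(μ − θ*) ). -/
open MeasureTheory Set Real

/-!
Write `c = θ*/μ`, `b = 1 - c` and `a = e^{rt} - c`, so that `a^h b^{1-h} = b (a/b)^h` with `a/b > 1`.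
The sampling map `G` is then strictly increasing, and solving `G(h) ≤ u` for `h` gives
`h ≤ log_{a/b} ((e^{ru} - c)/b)`, which is the claimed distribution function once numerator and
denominator are multiplied by `μ`. Since `G(0) = 0` and `G(1) = t`, the values lie in `[0,t]`, and
the probability is that of the uniform `H` lying below a point of `[0,1]`.
-/

lemma measure_preimage_Iic_of_map_eq_uniform {Ω : Type*} [MeasurableSpace Ω] {P : Measure Ω}
    {H : Ω → ℝ} (hH : Measurable H) (hHdist : P.map H = volume.restrict (Ico 0 1))
    {s : ℝ} (hs : s ≤ 1) :
    P (H ⁻¹' Iic s) = ENNReal.ofReal s := by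
  rw [← Measure.map_apply hH measurableSet_Iic, hHdist, Measure.restrict_apply measurableSet_Iic]
  apply le_antisymm
  · calc volume (Iic s ∩ Ico 0 1) ≤ volume (Icc 0 s) :=
          measure_mono fun x hx => ⟨hx.2.1, hx.1⟩
      _ = ENNReal.ofReal s := by rw [Real.volume_Icc, sub_zero]
  · calc ENNReal.ofReal s = volume (Ico 0 s) := by rw [Real.volume_Ico, sub_zero]
      _ ≤ volume (Iic s ∩ Ico 0 1) :=
          measure_mono fun x hx => ⟨hx.2.le, hx.1, hx.2.trans_le hs⟩

lemma rpow_mul_rpow_one_sub {a b : ℝ} (ha : 0 ≤ a) (hb : 0 < b) (x : ℝ) :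
    a ^ x * b ^ (1 - x) = b * (a / b) ^ x := by
  rw [rpow_sub hb, rpow_one, div_rpow ha hb.le]
  ring

lemma one_div_mul_log_le_iff {r z : ℝ} (hr : 0 < r) (hz : 0 < z) (u : ℝ) :
    1 / r * log z ≤ u ↔ z ≤ exp (r * u) := by
  rw [one_div, inv_mul_le_iff₀ hr, log_le_iff_le_exp hz]

lemma sub_div_one_sub_div {μ : ℝ} (hμ : μ ≠ 0) (x θ : ℝ) :
    (x - θ / μ) / (1 - θ / μ) = (μ * x - θ) / (μ - θ) := by
  rw [← mul_div_mul_left _ _ hμ, mul_sub, mul_sub, mul_div_cancel₀ _ hμ, mul_one]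

/-- The paper's `G`, with `e^{rt} - θ*/μ`, `1 - θ*/μ` and `θ*/μ` replaced by `a`, `b` and `c`. -/
noncomputable def twistedQuantile (r a b c h : ℝ) : ℝ :=
  1 / r * log (a ^ h * b ^ (1 - h) + c)

section

variable {r a b c : ℝ}

lemma twistedQuantile_le_iff (hr : 0 < r) (hb : 0 < b) (hba : b < a) (hc : 0 ≤ c)
    {u : ℝ} (hcu : c < exp (r * u)) (x : ℝ) :
    twistedQuantile r a b c x ≤ u ↔ x ≤ logb (a / b) ((exp (r * u) - c) / b) := by
  have hab : 1 < a / b := (one_lt_div hb).2 hba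
  rw [twistedQuantile, rpow_mul_rpow_one_sub (hb.trans hba).le hb,
    one_div_mul_log_le_iff hr (by positivity), ← le_sub_iff_add_le, ← le_div_iff₀' hb,
    le_logb_iff_rpow_le hab (div_pos (sub_pos.2 hcu) hb)]

lemma twistedQuantile_nonneg (hr : 0 < r) (hb : 0 < b) (hba : b < a) (hbc : 1 ≤ b + c)
    {h : ℝ} (hh : 0 ≤ h) :
    0 ≤ twistedQuantile r a b c h := by
  have hq : 1 ≤ (a / b) ^ h := one_le_rpow ((one_le_div hb).2 hba.le) hh
  have hlog : 0 ≤ log (a ^ h * b ^ (1 - h) + c) := by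
    rw [rpow_mul_rpow_one_sub (hb.trans hba).le hb]
    exact log_nonneg (by nlinarith)
  unfold twistedQuantile
  positivity

lemma twistedQuantile_le_of_le_one {t : ℝ} (hr : 0 < r) (hb : 0 < b) (hc : 0 ≤ c)
    (hba : b < exp (r * t) - c) {h : ℝ} (hh : h ≤ 1) :
    twistedQuantile r (exp (r * t) - c) b c h ≤ t := by
  rw [twistedQuantile_le_iff hr hb hba hc (by linarith), logb_self_eq_one ((one_lt_div hb).2 hba)]
  exact hh

end

theorem inverse_sampling_twisted_epochs_general
    {Ω : Type*} [MeasurableSpace Ω] (P : Measure Ω)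
    (r t μ θs : ℝ) (hr : 0 < r) (ht : 0 < t) (hμ : 0 < μ) (hθs : 0 < θs) (hθsμ : θs < μ)
    (H : Ω → ℝ) (hH : Measurable H)
    (hHdist : Measure.map H P = volume.restrict (Set.Ico (0 : ℝ) 1)) :
    (∀ h ∈ Set.Ico (0 : ℝ) 1,
      (1 / r) * Real.log ((Real.exp (r * t) - θs / μ) ^ h * (1 - θs / μ) ^ (1 - h) + θs / μ)
        ∈ Set.Icc 0 t) ∧
    ∀ u ∈ Set.Icc (0 : ℝ) t,
      P {ω | (1 / r) * Real.log ((Real.exp (r * t) - θs / μ) ^ (H ω)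
          * (1 - θs / μ) ^ (1 - H ω) + θs / μ) ≤ u}
        = ENNReal.ofReal
            (Real.log ((μ * Real.exp (r * u) - θs) / (μ - θs))
              / Real.log ((μ * Real.exp (r * t) - θs) / (μ - θs))) := by
  have hc : 0 < θs / μ := div_pos hθs hμ
  have hc1 : θs / μ < 1 := (div_lt_one hμ).2 hθsμ
  have hba : 1 - θs / μ < exp (r * t) - θs / μ := by linarith [one_lt_exp_iff.2 (mul_pos hr ht)]
  refine ⟨fun h hh => ⟨twistedQuantile_nonneg hr (by linarith) hba (by linarith) hh.1,
    twistedQuantile_le_of_le_one hr (by linarith) hc.le hba hh.2.le⟩, fun u hu => ?_⟩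
  have hcu : θs / μ < exp (r * u) := hc1.trans_le (one_le_exp (mul_nonneg hr.le hu.1))
  have hq : 1 < (exp (r * t) - θs / μ) / (1 - θs / μ) := (one_lt_div (by linarith)).2 hba
  set s := logb ((exp (r * t) - θs / μ) / (1 - θs / μ)) ((exp (r * u) - θs / μ) / (1 - θs / μ))
    with hs_def
  have hs : s ≤ 1 := by
    refine le_of_le_of_eq ?_ (logb_self_eq_one hq)
    rw [logb_le_logb hq (div_pos (by linarith) (by linarith)) (by linarith)]
    gcongr
    exact hu.2
  have hset : {ω | twistedQuantile r (exp (r * t) - θs / μ) (1 - θs / μ) (θs / μ) (H ω) ≤ u}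
      = H ⁻¹' Iic s := by
    ext ω
    exact twistedQuantile_le_iff hr (by linarith) hba hc.le hcu (H ω)
  unfold twistedQuantile at hset
  rw [hset, measure_preimage_Iic_of_map_eq_uniform hH hHdist hs, hs_def, ← log_div_log,
    sub_div_one_sub_div hμ.ne', sub_div_one_sub_div hμ.ne']

/-- **Inverse-distribution-function sampling of the twisted arrival epochs.** Let `H` be uniform
on `[0,1)` and `G(h) = (1/r) log ((e^{rt} - θ*/μ)^h (1 - θ*/μ)^{1-h} + θ*/μ)` (real powers).
Then `G(H)` takes values in `[0,t]` and for every `u ∈ [0,t]`,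
`P(G(H) ≤ u) = log((μ e^{ru} - θ*)/(μ - θ*)) / log((μ e^{rt} - θ*)/(μ - θ*))`. -/
theorem inverse_sampling_twisted_epochs
    {Ω : Type*} [MeasurableSpace Ω] (P : Measure Ω) [IsProbabilityMeasure P]
    (r t μ θs : ℝ) (hr : 0 < r) (ht : 0 < t) (hμ : 0 < μ) (hθs : 0 < θs) (hθsμ : θs < μ)
    (H : Ω → ℝ) (hH : Measurable H)
    (hHdist : Measure.map H P = volume.restrict (Set.Ico (0 : ℝ) 1)) :
    (∀ h ∈ Set.Ico (0 : ℝ) 1,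
      (1 / r) * Real.log ((Real.exp (r * t) - θs / μ) ^ h * (1 - θs / μ) ^ (1 - h) + θs / μ)
        ∈ Set.Icc 0 t) ∧
    ∀ u ∈ Set.Icc (0 : ℝ) t,
      P {ω | (1 / r) * Real.log ((Real.exp (r * t) - θs / μ) ^ (H ω)
          * (1 - θs / μ) ^ (1 - H ω) + θs / μ) ≤ u}
        = ENNReal.ofReal
            (Real.log ((μ * Real.exp (r * u) - θs) / (μ - θs))
              / Real.log ((μ * Real.exp (r * t) - θs) / (μ - θs))) :=
  inverse_sampling_twisted_epochs_general P r t μ θs hr ht hμ hθs hθsμ H hH hHdist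
end

section
/- Joint moment generating function of the two-node tandem: for all (θ_1, θ_2) for which the right-hand side's integrand is finite, E[ exp( θ_1 X^{(1)}(t) + θ_2 X^{(2)}(t) ) ] = exp( λ ∫_0^t ( β( e^{-r_1 u} θ_1 + (r_1/(r_1−r_2)) (e^{-r_2 u} − e^{-r_1 u}) θ_2 ) − 1 ) du ). -/
/-!
With `θ(u) = e^{-r₁u} θ₁ + (r₁/(r₁-r₂)) (e^{-r₂u} - e^{-r₁u}) θ₂`, the exponent
`θ₁ X¹(t) + θ₂ X²(t)` equals `∑_{j<N} θ(U_j) B_j`, so the integrand is a product of `N` factors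
`exp(θ(U_j) B_j)`. On `{N = n}` the count and the marks `(U_j, B_j)`, `j < n`, are independent
blocks, hence the expectation is `E[m^N]` with `m = E[exp(θ(U) B)] = t⁻¹ ∫_0^t β(θ(u)) du`, and the
Poisson generating function `E[m^N] = exp(λt(m - 1))` gives the formula.
Since `B ≥ 0`, `β` is continuous on each half-line `(-∞, θ₀]` where it is finite (dominated by
`β(θ₀)`), which makes `u ↦ β(θ(u))` integrable on `[0, t]`.
-/

open MeasureTheory ProbabilityTheory
open scoped ENNReal NNReal

noncomputable section

abbrev ShotIdx : Type := Unit ⊕ ℕ ⊕ ℕ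

abbrev shotType : ShotIdx → Type := fun i => Sum.elim (fun _ => ℕ) (fun _ => ℝ) i

instance shotTypeMS : ∀ i : ShotIdx, MeasurableSpace (shotType i) := fun i =>
  match i with
  | .inl _ => (inferInstance : MeasurableSpace ℕ)
  | .inr (.inl _) => (inferInstance : MeasurableSpace ℝ)
  | .inr (.inr _) => (inferInstance : MeasurableSpace ℝ)

def shotFam {Ω : Type*} (N : Ω → ℕ) (U B : ℕ → Ω → ℝ) : ∀ i : ShotIdx, Ω → shotType i :=
  fun i =>
  match i with
  | .inl _ => N
  | .inr (.inl j) => U j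
  | .inr (.inr j) => B j

section

variable {Ω : Type*} {mΩ : MeasurableSpace Ω} {μ : Measure Ω}

theorem lintegral_prod_eq_prod_lintegral_of_iIndep {ι κ : Type*}
    {m : ι → MeasurableSpace Ω} (h_le : ∀ i, m i ≤ mΩ) (h_indep : iIndep m μ)
    {S : κ → Set ι} {s : Finset κ} (hS : (s : Set κ).PairwiseDisjoint S)
    {f : κ → Ω → ℝ≥0∞} (hf : ∀ k ∈ s, Measurable[⨆ i ∈ S k, m i] (f k)) :
    ∫⁻ ω, ∏ k ∈ s, f k ω ∂μ = ∏ k ∈ s, ∫⁻ ω, f k ω ∂μ := by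
  induction s using Finset.cons_induction with
  | empty => simp [h_indep.isProbabilityMeasure]
  | cons k s hk ih =>
    rw [Finset.coe_cons, Set.pairwiseDisjoint_insert_of_notMem (by simpa using hk)] at hS
    have hdisj : Disjoint (S k) (⋃ l ∈ s, S l) :=
      Set.disjoint_iUnion₂_right.mpr fun l hl => hS.2 l hl
    have hrest : Measurable[⨆ i ∈ ⋃ l ∈ s, S l, m i] fun ω => ∏ l ∈ s, f l ω :=
      Finset.measurable_prod _ fun l hl => (hf l (Finset.mem_cons_of_mem hl)).mono
        (iSup₂_le fun i hi => le_biSup m (Set.mem_biUnion hl hi)) le_rfl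
    simp only [Finset.prod_cons]
    rw [lintegral_mul_eq_lintegral_mul_lintegral_of_independent_measurableSpace
      (iSup₂_le fun i _ => h_le i) (iSup₂_le fun i _ => h_le i)
      (indep_iSup_of_disjoint h_le h_indep hdisj) (hf k (Finset.mem_cons_self k s)) hrest,
      ih hS.1 fun l hl => hf l (Finset.mem_cons_of_mem hl)]

theorem lintegral_prod_range_eq_tsum {N : Ω → ℕ} (hN : Measurable N)
    {G : ℕ → Ω → ℝ≥0∞} (hG : ∀ j, Measurable (G j)) :
    ∫⁻ ω, ∏ j ∈ Finset.range (N ω), G j ω ∂μ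
      = ∑' n,
          ∫⁻ ω, (N ⁻¹' {n}).indicator (fun ω => ∏ j ∈ Finset.range n, G j ω) ω ∂μ := by
  rw [← lintegral_tsum fun n => ((Finset.measurable_prod _ fun j _ => hG j).indicator
    (hN (measurableSet_singleton n))).aemeasurable]
  refine lintegral_congr fun ω => ?_
  rw [tsum_eq_single (N ω) fun n hn => by simp [Ne.symm hn]]
  simp

theorem measurable_prod_range {M : Type*} [CommMonoid M] [MeasurableSpace M] [MeasurableMul₂ M]
    {f : ℕ → Ω → M} (hf : ∀ j, Measurable (f j)) {N : Ω → ℕ} (hN : Measurable N) :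
    Measurable fun ω => ∏ j ∈ Finset.range (N ω), f j ω :=
  have hcurried : Measurable fun p : Ω × ℕ => ∏ j ∈ Finset.range p.2, f j p.1 :=
    measurable_from_prod_countable_left fun n =>
      Finset.measurable_prod (Finset.range n) fun j _ => hf j
  hcurried.comp (measurable_id.prodMk hN)

theorem integral_prod_range_eq_toReal_lintegral {f : ℕ → Ω → ℝ} (hf : ∀ j, Measurable (f j))
    (hf0 : ∀ j ω, 0 ≤ f j ω) {N : Ω → ℕ} (hN : Measurable N) :
    ∫ ω, ∏ j ∈ Finset.range (N ω), f j ω ∂μ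
      = (∫⁻ ω, ∏ j ∈ Finset.range (N ω), ENNReal.ofReal (f j ω) ∂μ).toReal := by
  rw [integral_eq_lintegral_of_nonneg_ae
    (ae_of_all _ fun ω => Finset.prod_nonneg fun j _ => hf0 j ω)
    (measurable_prod_range hf hN).aestronglyMeasurable]
  simp_rw [ENNReal.ofReal_prod_of_nonneg fun j _ => hf0 j _]

theorem lintegral_comp_prodMk_of_indepFun [IsFiniteMeasure μ] {α β : Type*}
    [MeasurableSpace α] [MeasurableSpace β] {X : Ω → α} {Y : Ω → β} (hX : Measurable X)
    (hY : Measurable Y) (hXY : IndepFun X Y μ) {g : α × β → ℝ≥0∞} (hg : Measurable g) :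
    ∫⁻ ω, g (X ω, Y ω) ∂μ = ∫⁻ p, g p ∂((μ.map X).prod (μ.map Y)) := by
  rw [← (indepFun_iff_map_prod_eq_prod_map_map hX.aemeasurable hY.aemeasurable).mp hXY,
    lintegral_map hg (hX.prodMk hY)]

theorem continuousOn_mgf_Iic_of_nonneg {X : Ω → ℝ} (hX : AEMeasurable X μ)
    (hX0 : 0 ≤ᵐ[μ] X) {θ₀ : ℝ} (h : Integrable (fun ω => Real.exp (θ₀ * X ω)) μ) :
    ContinuousOn (mgf X μ) (Set.Iic θ₀) := by
  refine continuousOn_of_dominated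
    (fun θ _ => (Real.measurable_exp.comp_aemeasurable (hX.const_mul θ)).aestronglyMeasurable)
    (fun θ hθ => ?_) h (Filter.Eventually.of_forall fun ω => by fun_prop)
  filter_upwards [hX0] with ω hω
  rw [Real.norm_of_nonneg (Real.exp_pos _).le, Real.exp_le_exp]
  exact mul_le_mul_of_nonneg_right hθ hω

theorem continuousOn_mgf_comp_of_nonneg {X : Ω → ℝ} (hX : AEMeasurable X μ)
    (hX0 : 0 ≤ᵐ[μ] X) {K : Set ℝ} (hK : IsCompact K) {θ : ℝ → ℝ}
    (hθ : ContinuousOn θ K)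
    (hfin : ∀ u ∈ K, Integrable (fun ω => Real.exp (θ u * X ω)) μ) :
    ContinuousOn (fun u => mgf X μ (θ u)) K := by
  rcases K.eq_empty_or_nonempty with rfl | hne
  · exact continuousOn_empty _
  obtain ⟨u₀, hu₀, hmax⟩ := hK.exists_isMaxOn hne hθ
  exact (continuousOn_mgf_Iic_of_nonneg hX hX0 (hfin u₀ hu₀)).comp hθ fun u hu => hmax hu

theorem lintegral_exp_mul_prod_map {α : Type*} [MeasurableSpace α] {ν : Measure α} [SFinite ν]
    [SFinite μ] {θ : α → ℝ} (hθ : Measurable θ) {X : Ω → ℝ} (hX : Measurable X)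
    (hfin : ∀ᵐ u ∂ν, Integrable (fun ω => Real.exp (θ u * X ω)) μ)
    (hint : Integrable (fun u => mgf X μ (θ u)) ν) :
    ∫⁻ p, ENNReal.ofReal (Real.exp (θ p.1 * p.2)) ∂(ν.prod (μ.map X))
      = ENNReal.ofReal (∫ u, mgf X μ (θ u) ∂ν) := by
  rw [lintegral_prod _ (by fun_prop), ofReal_integral_eq_lintegral_ofReal hint
    (Filter.Eventually.of_forall fun u => mgf_nonneg)]
  refine lintegral_congr_ae ?_
  filter_upwards [hfin] with u hu
  rw [lintegral_map (by fun_prop) hX, mgf, ofReal_integral_eq_lintegral_ofReal hu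
    (Filter.Eventually.of_forall fun ω => (Real.exp_pos _).le)]

theorem lintegral_exp_mul_uniform_prod_map [SFinite μ] {θ : ℝ → ℝ} (hθ : Measurable θ)
    {X : Ω → ℝ} (hX : Measurable X) {t : ℝ} (ht : 0 < t)
    (hfin : ∀ u ∈ Set.Icc 0 t, Integrable (fun ω => Real.exp (θ u * X ω)) μ)
    (hint : IntegrableOn (fun u => mgf X μ (θ u)) (Set.Icc 0 t)) :
    ∫⁻ p, ENNReal.ofReal (Real.exp (θ p.1 * p.2))
        ∂(((ENNReal.ofReal t)⁻¹ • volume.restrict (Set.Icc 0 t)).prod (μ.map X))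
      = ENNReal.ofReal ((∫ u in Set.Icc 0 t, mgf X μ (θ u)) / t) := by
  rw [lintegral_exp_mul_prod_map hθ hX
      (Measure.ae_smul_measure (ae_restrict_of_forall_mem measurableSet_Icc hfin) _)
      (hint.smul_measure (ENNReal.inv_ne_top.mpr (ENNReal.ofReal_pos.mpr ht).ne')),
    integral_smul_measure, ENNReal.toReal_inv, ENNReal.toReal_ofReal ht.le, smul_eq_mul,
    inv_mul_eq_div]

end

theorem lintegral_pow_poissonMeasure (r : ℝ≥0) {x : ℝ} (hx : 0 ≤ x) :
    ∫⁻ n, ENNReal.ofReal x ^ n ∂poissonMeasure r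
      = ENNReal.ofReal (Real.exp (r * (x - 1))) := by
  have hterm : ∀ n : ℕ, Real.exp (-r) * r ^ n / n.factorial * x ^ n
      = Real.exp (-r) * ((r * x) ^ n / n.factorial) := fun n => by ring
  have hseries : HasSum (fun n : ℕ => Real.exp (-r) * r ^ n / n.factorial * x ^ n)
      (Real.exp (r * (x - 1))) := by
    have h := (NormedSpace.expSeries_div_hasSum_exp (r * x : ℝ)).mul_left (Real.exp (-r))
    rw [← Real.exp_eq_exp_ℝ, ← Real.exp_add] at h
    simp_rw [hterm]
    rwa [show (r : ℝ) * (x - 1) = -r + r * x by ring]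
  rw [lintegral_countable', ← hseries.tsum_eq,
    ENNReal.ofReal_tsum_of_nonneg (fun n => by positivity) hseries.summable]
  refine tsum_congr fun n => ?_
  rw [poissonMeasure_singleton, ← ENNReal.ofReal_pow hx, ← ENNReal.ofReal_mul (by positivity),
    mul_comm]

theorem lintegral_prod_range_shotFam {Ω : Type*} [MeasurableSpace Ω] {P : Measure Ω}
    {N : Ω → ℕ} {U B : ℕ → Ω → ℝ} (hN : Measurable N) (hU : ∀ j, Measurable (U j))
    (hB : ∀ j, Measurable (B j)) (hIndep : iIndepFun (shotFam N U B) P)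
    {μU μB : Measure ℝ} (hUdist : ∀ j, P.map (U j) = μU) (hBdist : ∀ j, P.map (B j) = μB)
    {g : ℝ × ℝ → ℝ≥0∞} (hg : Measurable g) :
    ∫⁻ ω, ∏ j ∈ Finset.range (N ω), g (U j ω, B j ω) ∂P
      = ∫⁻ n, (∫⁻ p, g p ∂(μU.prod μB)) ^ n ∂(P.map N) := by
  have := hIndep.isProbabilityMeasure
  set m : ShotIdx → MeasurableSpace Ω := fun i => (shotTypeMS i).comap (shotFam N U B i)
  have h_le : ∀ i, m i ≤ ‹_› := by
    rintro (_ | j | j)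
    exacts [hN.comap_le, (hU j).comap_le, (hB j).comap_le]
  let S : Option ℕ → Set ShotIdx :=
    fun k => k.elim {.inl ()} fun j => {.inr (.inl j), .inr (.inr j)}
  have hS : Pairwise fun k l => Disjoint (S k) (S l) := by
    rintro (_ | j) (_ | k) hjk <;> simp_all [S, eq_comm]
  have hcoord : ∀ k, ∀ i ∈ S k, Measurable[⨆ i ∈ S k, m i] (shotFam N U B i) :=
    fun k i hi => Measurable.of_comap_le (le_biSup m hi)
  have hmark : ∀ j, Measurable[⨆ i ∈ S (some j), m i] fun ω => g (U j ω, B j ω) := fun j =>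
    hg.comp ((hcoord (some j) (.inr (.inl j)) (by simp [S])).prodMk
      (hcoord (some j) (.inr (.inr j)) (by simp [S])))
  have hcount : ∀ n, Measurable[⨆ i ∈ S none, m i]
      fun ω => ({n} : Set ℕ).indicator (1 : ℕ → ℝ≥0∞) (N ω) := fun n =>
    (measurable_one.indicator (measurableSet_singleton n)).comp
      (hcoord none (.inl ()) (Set.mem_singleton _))
  have hmean : ∀ j, ∫⁻ ω, g (U j ω, B j ω) ∂P = ∫⁻ p, g p ∂(μU.prod μB) := by
    intro j
    rw [lintegral_comp_prodMk_of_indepFun (hU j) (hB j)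
      (hIndep.indepFun (i := .inr (.inl j)) (j := .inr (.inr j)) (by simp)) hg, hUdist, hBdist]
  rw [lintegral_prod_range_eq_tsum (G := fun j ω => g (U j ω, B j ω)) hN
    (fun j => hg.comp ((hU j).prodMk (hB j))), lintegral_countable']
  refine tsum_congr fun n => ?_
  let f : Option ℕ → Ω → ℝ≥0∞ := fun k =>
    k.elim (fun ω => ({n} : Set ℕ).indicator 1 (N ω)) fun j ω => g (U j ω, B j ω)
  have hsplit : ∀ ω,
      (N ⁻¹' {n}).indicator (fun ω => ∏ j ∈ Finset.range n, g (U j ω, B j ω)) ω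
        = ∏ k ∈ (Finset.range n).insertNone, f k ω := by
    intro ω
    by_cases h : N ω = n <;> simp [f, h]
  rw [lintegral_congr hsplit, lintegral_prod_eq_prod_lintegral_of_iIndep h_le hIndep.iIndep
    (hS.set_pairwise _) (by rintro (_ | j) _; exacts [hcount n, hmark j]), Finset.prod_insertNone]
  have hcount_mean : ∫⁻ ω, f none ω ∂P = P.map N {n} := by
    rw [← lintegral_indicator_one (measurableSet_singleton n),
      lintegral_map (measurable_one.indicator (measurableSet_singleton n)) hN]
    rfl
  rw [hcount_mean, mul_comm]
  simp only [f, Option.elim, hmean, Finset.prod_const, Finset.card_range]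

theorem tandem_joint_mgf_general
    {Ω : Type*} [MeasurableSpace Ω] (P : Measure Ω) [IsProbabilityMeasure P]
    (lam t r₁ r₂ : ℝ) (hlam : 0 < lam) (ht : 0 < t)
    (N : Ω → ℕ) (U B : ℕ → Ω → ℝ)
    (hN : Measurable N) (hU : ∀ j, Measurable (U j)) (hB : ∀ j, Measurable (B j))
    (hNdist : Measure.map N P = poissonMeasure (lam * t).toNNReal)
    (hUdist : ∀ j, Measure.map (U j) P
      = (ENNReal.ofReal t)⁻¹ • volume.restrict (Set.Icc (0 : ℝ) t))
    (hBpos : ∀ j ω, 0 ≤ B j ω)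
    (hBdist : ∀ j, Measure.map (B j) P = Measure.map (B 0) P)
    (hIndep : iIndepFun (m := shotTypeMS) (shotFam N U B) P)
    (θ₁ θ₂ : ℝ)
    (hfin : ∀ u ∈ Set.Icc (0 : ℝ) t,
      Integrable (fun ω => Real.exp ((Real.exp (-(r₁ * u)) * θ₁
        + r₁ / (r₁ - r₂) * (Real.exp (-(r₂ * u)) - Real.exp (-(r₁ * u))) * θ₂) * B 0 ω)) P) :
    (∫ ω, Real.exp (θ₁ * ∑ j ∈ Finset.range (N ω), B j ω * Real.exp (-(r₁ * U j ω))
        + θ₂ * ∑ j ∈ Finset.range (N ω), B j ω * (r₁ / (r₁ - r₂))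
            * (Real.exp (-(r₂ * U j ω)) - Real.exp (-(r₁ * U j ω)))) ∂P)
      = Real.exp (lam * ∫ u in Set.Icc (0 : ℝ) t,
          (mgf (B 0) P (Real.exp (-(r₁ * u)) * θ₁
            + r₁ / (r₁ - r₂) * (Real.exp (-(r₂ * u)) - Real.exp (-(r₁ * u))) * θ₂) - 1)) := by
  set θ : ℝ → ℝ := fun u => Real.exp (-(r₁ * u)) * θ₁
    + r₁ / (r₁ - r₂) * (Real.exp (-(r₂ * u)) - Real.exp (-(r₁ * u))) * θ₂
  have hθ : Continuous θ := by fun_prop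
  have hexponent : ∀ ω,
      θ₁ * ∑ j ∈ Finset.range (N ω), B j ω * Real.exp (-(r₁ * U j ω))
        + θ₂ * ∑ j ∈ Finset.range (N ω), B j ω * (r₁ / (r₁ - r₂))
          * (Real.exp (-(r₂ * U j ω)) - Real.exp (-(r₁ * U j ω)))
      = ∑ j ∈ Finset.range (N ω), θ (U j ω) * B j ω := fun ω => by
    rw [Finset.mul_sum, Finset.mul_sum, ← Finset.sum_add_distrib]
    exact Finset.sum_congr rfl fun j _ => by ring
  simp_rw [hexponent, Real.exp_sum]
  have hF : IntegrableOn (fun u => mgf (B 0) P (θ u)) (Set.Icc 0 t) :=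
    (continuousOn_mgf_comp_of_nonneg (hB 0).aemeasurable (ae_of_all _ (hBpos 0)) isCompact_Icc
      hθ.continuousOn hfin).integrableOn_compact isCompact_Icc
  set I := ∫ u in Set.Icc 0 t, mgf (B 0) P (θ u)
  have hI : 0 ≤ I := setIntegral_nonneg measurableSet_Icc fun _ _ => mgf_nonneg
  have hrate : ((lam * t).toNNReal : ℝ) = lam * t := Real.coe_toNNReal _ (mul_pos hlam ht).le
  calc ∫ ω, ∏ j ∈ Finset.range (N ω), Real.exp (θ (U j ω) * B j ω) ∂P
      = (∫⁻ ω, ∏ j ∈ Finset.range (N ω),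
          ENNReal.ofReal (Real.exp (θ (U j ω) * B j ω)) ∂P).toReal :=
        integral_prod_range_eq_toReal_lintegral (fun j => by fun_prop)
          (fun j ω => (Real.exp_pos _).le) hN
    _ = (∫⁻ n, ENNReal.ofReal (I / t) ^ n ∂poissonMeasure (lam * t).toNNReal).toReal := by
        rw [lintegral_prod_range_shotFam hN hU hB hIndep hUdist hBdist
            (g := fun p => ENNReal.ofReal (Real.exp (θ p.1 * p.2))) (by fun_prop),
          lintegral_exp_mul_uniform_prod_map hθ.measurable (hB 0) ht hfin hF, hNdist]
    _ = Real.exp (lam * t * (I / t - 1)) := by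
        rw [lintegral_pow_poissonMeasure _ (div_nonneg hI ht.le),
          ENNReal.toReal_ofReal (Real.exp_pos _).le, hrate]
    _ = _ := by
        rw [integral_sub hF (integrableOn_const (by simp)), setIntegral_const,
          Real.volume_real_Icc_of_le ht.le, smul_eq_mul]
        congr 1
        field_simp
        ring

/-- **Joint MGF of the two-node tandem.** With `N` Poisson of mean `λ t`, the `U j` i.i.d.
uniform on `[0,t]`, the `B j` i.i.d. nonnegative with MGF `β`, all mutually independent,
`X¹(t) = ∑_{j<N} B j e^{-r₁ U j}` and
`X²(t) = ∑_{j<N} B j (r₁/(r₁-r₂)) (e^{-r₂ U j} - e^{-r₁ U j})`, one has, for all `(θ₁, θ₂)`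
making the integrand on the right finite,
`E[exp(θ₁ X¹(t) + θ₂ X²(t))] = exp(λ ∫_0^t (β(e^{-r₁u}θ₁ + (r₁/(r₁-r₂))(e^{-r₂u}-e^{-r₁u})θ₂) - 1) du)`. -/
theorem tandem_joint_mgf
    {Ω : Type*} [MeasurableSpace Ω] (P : Measure Ω) [IsProbabilityMeasure P]
    (lam t r₁ r₂ : ℝ) (hlam : 0 < lam) (ht : 0 < t) (hr₁ : 0 < r₁) (hr₂ : 0 < r₂)
    (hr : r₁ ≠ r₂)
    (N : Ω → ℕ) (U B : ℕ → Ω → ℝ)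
    (hN : Measurable N) (hU : ∀ j, Measurable (U j)) (hB : ∀ j, Measurable (B j))
    (hNdist : Measure.map N P = poissonMeasure (lam * t).toNNReal)
    (hUdist : ∀ j, Measure.map (U j) P
      = (ENNReal.ofReal t)⁻¹ • volume.restrict (Set.Icc (0 : ℝ) t))
    (hBpos : ∀ j ω, 0 ≤ B j ω)
    (hBdist : ∀ j, Measure.map (B j) P = Measure.map (B 0) P)
    (hIndep : iIndepFun (m := shotTypeMS) (shotFam N U B) P)
    (θ₁ θ₂ : ℝ)
    (hfin : ∀ u ∈ Set.Icc (0 : ℝ) t,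
      Integrable (fun ω => Real.exp ((Real.exp (-(r₁ * u)) * θ₁
        + r₁ / (r₁ - r₂) * (Real.exp (-(r₂ * u)) - Real.exp (-(r₁ * u))) * θ₂) * B 0 ω)) P) :
    (∫ ω, Real.exp (θ₁ * ∑ j ∈ Finset.range (N ω), B j ω * Real.exp (-(r₁ * U j ω))
        + θ₂ * ∑ j ∈ Finset.range (N ω), B j ω * (r₁ / (r₁ - r₂))
            * (Real.exp (-(r₂ * U j ω)) - Real.exp (-(r₁ * U j ω)))) ∂P)
      = Real.exp (lam * ∫ u in Set.Icc (0 : ℝ) t,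
          (mgf (B 0) P (Real.exp (-(r₁ * u)) * θ₁
            + r₁ / (r₁ - r₂) * (Real.exp (-(r₂ * u)) - Real.exp (-(r₁ * u))) * θ₂) - 1)) :=
  tandem_joint_mgf_general P lam t r₁ r₂ hlam ht N U B hN hU hB hNdist hUdist hBpos hBdist hIndep θ₁
    θ₂ hfin
end
end

section
/- Differentiation rule for Kronecker products with an identity factor on the right: if A: ℝ^L → ℝ^{n_1×n_2} is differentiable and q ∈ ℕ, then ∇(A(θ) ⊗ I_q) = (K_{n_1,q} ⊗ I_L) ( I_q ⊗ ∇A(θ) ) K_{q,n_2}, where K_{m,n} := Σ_{i=1}^m Σ_{j=1}^n ( H_{ij} ⊗ H_{ij}^T ) is the commutation matrix, H_{ij} ∈ ℝ^{m×n} being the matrix with a 1 in position (i,j) and zeros elsewhere. -/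
open Matrix
open scoped Kronecker

noncomputable section

/-- The stacked-gradient operator on matrix-valued maps: for `f : ℝ^L → ℝ^{n₁×n₂}`, `∇f` is the
`(n₁ × L) × n₂` matrix whose row `(i, k)` and column `j` entry is `∂f_{ij}/∂θ_k`. -/
def mgrad {L : ℕ} {n₁ n₂ : Type*} (f : (Fin L → ℝ) → Matrix n₁ n₂ ℝ)
    (θ : Fin L → ℝ) : Matrix (n₁ × Fin L) n₂ ℝ :=
  Matrix.of fun ik j => fderiv ℝ (fun x => f x ik.1 j) θ (Pi.single ik.2 1)

/-- The commutation matrix `K_{m,n} = ∑_i ∑_j H_{ij} ⊗ H_{ij}ᵀ`, where `H_{ij}` has a `1` in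
position `(i,j)` and zeros elsewhere. -/
def commMat (m n : Type*) [Fintype m] [Fintype n] [DecidableEq m] [DecidableEq n] :
    Matrix (m × n) (n × m) ℝ :=
  ∑ i : m, ∑ j : n,
    (Matrix.single i j (1 : ℝ)) ⊗ₖ (Matrix.single i j (1 : ℝ))ᵀ

/-!
Entrywise both sides equal `δ_{st} ∂A_{ij}/∂θ_k` at row `((i, s), k)` and column `(j, t)`: on the
left because `δ_{st}` is a constant factor and constant multiples commute with `fderiv` over a
field, on the right because multiplying by a commutation matrix only swaps the two components of an
index.
-/

lemma mgrad_kronecker_const_apply {L : ℕ} {m n p r : Type*}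
    (A : (Fin L → ℝ) → Matrix m n ℝ) (B : Matrix p r ℝ) (θ : Fin L → ℝ)
    (i : m) (s : p) (k : Fin L) (j : n) (t : r) :
    mgrad (fun x => A x ⊗ₖ B) θ ((i, s), k) (j, t) = B s t * mgrad A θ (i, k) j := by
  have hsmul : (fun x => (A x ⊗ₖ B) (i, s) (j, t)) = B s t • fun x => A x i j := by
    ext x
    simp [kroneckerMap_apply, mul_comm]
  simp only [mgrad, of_apply, hsmul, fderiv_const_smul_field, Pi.smul_apply,
    _root_.smul_apply, smul_eq_mul]

section CommMat

variable {m n : Type*} [Fintype m] [Fintype n] [DecidableEq m] [DecidableEq n]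

lemma commMat_apply (a : m) (b : n) (c : n) (d : m) :
    commMat m n (a, b) (c, d) = if a = d ∧ b = c then 1 else 0 := by
  simp only [commMat, Matrix.sum_apply, kroneckerMap_apply, single_apply, transpose_apply,
    ite_and, mul_ite, mul_one, mul_zero]
  by_cases had : a = d <;> by_cases hbc : b = c <;> simp [had, hbc, eq_comm]

lemma mul_commMat_apply {r : Type*} (N : Matrix r (m × n) ℝ) (x : r) (c : n) (d : m) :
    (N * commMat m n) x (c, d) = N x (d, c) := by
  simp [mul_apply, Fintype.sum_prod_type, commMat_apply, ite_and]

lemma commMat_kronecker_one_mul_apply {l r : Type*} [Fintype l] [DecidableEq l]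
    (N : Matrix ((n × m) × l) r ℝ) (a : m) (b : n) (k : l) (y : r) :
    ((commMat m n ⊗ₖ (1 : Matrix l l ℝ)) * N) ((a, b), k) y = N ((b, a), k) y := by
  simp [mul_apply, Fintype.sum_prod_type, kroneckerMap_apply, commMat_apply, one_apply, ite_and]

end CommMat

theorem mgrad_kronecker_id_general {L n₁ n₂ q : ℕ}
    (A : (Fin L → ℝ) → Matrix (Fin n₁) (Fin n₂) ℝ)
    (θ : Fin L → ℝ) :
    mgrad (fun x => A x ⊗ₖ (1 : Matrix (Fin q) (Fin q) ℝ)) θ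
      = (commMat (Fin n₁) (Fin q) ⊗ₖ (1 : Matrix (Fin L) (Fin L) ℝ))
        * (Matrix.reindex (Equiv.prodAssoc (Fin q) (Fin n₁) (Fin L)).symm (Equiv.refl _)
            ((1 : Matrix (Fin q) (Fin q) ℝ) ⊗ₖ mgrad A θ))
        * commMat (Fin q) (Fin n₂) := by
  ext ⟨⟨i, s⟩, k⟩ ⟨j, t⟩
  rw [mgrad_kronecker_const_apply, mul_commMat_apply, commMat_kronecker_one_mul_apply]
  simp [reindex_apply, kroneckerMap_apply]

/-- **Differentiation rule for Kronecker products with an identity factor on the right**: if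
`A : ℝ^L → ℝ^{n₁×n₂}` is differentiable and `q ∈ ℕ`, then
`∇(A ⊗ I_q) = (K_{n₁,q} ⊗ I_L) (I_q ⊗ ∇A) K_{q,n₂}` (with the canonical associativity
identification of the row index of the middle factor). -/
theorem mgrad_kronecker_id {L n₁ n₂ q : ℕ}
    (A : (Fin L → ℝ) → Matrix (Fin n₁) (Fin n₂) ℝ)
    (hA : ∀ i j, Differentiable ℝ fun θ => A θ i j)
    (θ : Fin L → ℝ) :
    mgrad (fun x => A x ⊗ₖ (1 : Matrix (Fin q) (Fin q) ℝ)) θ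
      = (commMat (Fin n₁) (Fin q) ⊗ₖ (1 : Matrix (Fin L) (Fin L) ℝ))
        * (Matrix.reindex (Equiv.prodAssoc (Fin q) (Fin n₁) (Fin L)).symm (Equiv.refl _)
            ((1 : Matrix (Fin q) (Fin q) ℝ) ⊗ₖ mgrad A θ))
        * commMat (Fin q) (Fin n₂) :=
  mgrad_kronecker_id_general A θ

end
end

section
/- First-moment ODE from the transform PDE: under the stated hypotheses, the map z_1(t) := ∇_θ Ξ(0, t) ∈ ℝ^{dL} satisfies z_1'(t) = (Λ ⊗ I_L) ∇B(0) π(t) + ( (Q^T ⊗ I_L) − R^T ) z_1(t), where π(t) := Ξ(0, t) ∈ ℝ^d. -/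
open Matrix
open scoped Kronecker

noncomputable section

/-- The matrix `I_d ⊗ θᵀ : ℝ^{d × dL}` (with row index `j` and column index `(j',k)`, its entry
is `δ_{jj'} θ_k`). -/
def idKronRowVec (d : ℕ) {L : ℕ} (θ : Fin L → ℝ) : Matrix (Fin d) (Fin d × Fin L) ℝ :=
  Matrix.of fun j p => if j = p.1 then θ p.2 else 0

/-!
Fix `t ≥ 0`. Since `Ξ` is `C¹` in time, the one-sided derivative in the PDE is the ordinary
`∂_t Ξ(θ, t)`, so the PDE is an identity between two functions of `θ` and may be differentiated
in `θ` at `θ = 0`. On the left, Schwarz's theorem turns `∇_θ ∂_t Ξ(0, t)` into `z₁'(t)`. On the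
right, the product rule applies term by term: `Λ(B(θ) - I)` vanishes at `0` and leaves only
`(Λ ⊗ I) ∇B(0) π(t)`; `Qᵀ` is constant and gives `(Qᵀ ⊗ I) z₁(t)`; and `I ⊗ θᵀ` vanishes at `0`
with gradient the identity, so the transport term contributes `Rᵀ z₁(t)`.
-/

section MixedPartials

variable {E F : Type*} [NormedAddCommGroup E] [NormedSpace ℝ E]
  [NormedAddCommGroup F] [NormedSpace ℝ F]

lemma fderiv_comp_prodMk_const {g : E × ℝ → F} {x : E} {t : ℝ}
    (hg : DifferentiableAt ℝ g (x, t)) (v : E) :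
    fderiv ℝ (fun y => g (y, t)) x v = fderiv ℝ g (x, t) (v, 0) := by
  have h : HasFDerivAt (fun y => g (y, t)) _ x :=
    hg.hasFDerivAt.comp x (hasFDerivAt_prodMk_left x t)
  simp [h.fderiv]

lemma hasDerivAt_comp_const_prodMk {g : E × ℝ → F} {x : E} {t : ℝ}
    (hg : DifferentiableAt ℝ g (x, t)) :
    HasDerivAt (fun u => g (x, u)) (fderiv ℝ g (x, t) (0, 1)) t :=
  hg.hasFDerivAt.comp_hasDerivAt t ((hasDerivAt_const t x).prodMk (hasDerivAt_id t))

-- Schwarz's theorem: `∂_t ∂_v g = ∂_v ∂_t g`.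
theorem hasDerivAt_fderiv_comp_prodMk {g : E × ℝ → F} (hg : ContDiff ℝ 2 g) (x v : E) (t : ℝ) :
    HasDerivAt (fun u => fderiv ℝ (fun y => g (y, u)) x v)
      (fderiv ℝ (fun y => deriv (fun u => g (y, u)) t) x v) t := by
  have hg₁ : Differentiable ℝ g := hg.differentiable two_ne_zero
  have hg₂ : Differentiable ℝ (fderiv ℝ g) :=
    (hg.fderiv_right (m := 1) (by norm_num)).differentiable one_ne_zero
  have hsymm : IsSymmSndFDerivAt ℝ g (x, t) :=
    hg.contDiffAt.isSymmSndFDerivAt (by simp [minSmoothness_of_isRCLikeNormedField])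
  have hpartial_t : (fun y => deriv (fun u => g (y, u)) t) = fun y => fderiv ℝ g (y, t) (0, 1) :=
    funext fun y => (hasDerivAt_comp_const_prodMk (hg₁ _)).deriv
  simp_rw [fderiv_comp_prodMk_const (hg₁ _), hpartial_t,
    fderiv_comp_prodMk_const (g := fun q => fderiv ℝ g q (0, 1))
      ((hg₂ _).clm_apply (differentiableAt_const _)),
    fderiv_clm_apply (hg₂ _) (differentiableAt_const _)]
  simpa [hsymm.eq (0, 1)] using (hasDerivAt_comp_const_prodMk (hg₂ (x, t))).clm_apply
    (hasDerivAt_const t ((v, 0) : E × ℝ))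

end MixedPartials

section StackedGradient

variable {L : ℕ} {l m n : Type*} {θ : Fin L → ℝ}

def vgrad (f : (Fin L → ℝ) → m → ℝ) (θ : Fin L → ℝ) : m × Fin L → ℝ :=
  fun p => fderiv ℝ (fun x => f x p.1) θ (Pi.single p.2 1)

lemma vgrad_add {f g : (Fin L → ℝ) → m → ℝ} (hf : ∀ i, DifferentiableAt ℝ (fun x => f x i) θ)
    (hg : ∀ i, DifferentiableAt ℝ (fun x => g x i) θ) :
    vgrad (fun x => f x + g x) θ = vgrad f θ + vgrad g θ := by
  ext p
  simp [vgrad, fderiv_fun_add (hf p.1) (hg p.1)]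

lemma vgrad_sub {f g : (Fin L → ℝ) → m → ℝ} (hf : ∀ i, DifferentiableAt ℝ (fun x => f x i) θ)
    (hg : ∀ i, DifferentiableAt ℝ (fun x => g x i) θ) :
    vgrad (fun x => f x - g x) θ = vgrad f θ - vgrad g θ := by
  ext p
  simp [vgrad, fderiv_fun_sub (hf p.1) (hg p.1)]

lemma differentiable_vgrad_apply {f : (Fin L → ℝ) → m → ℝ}
    (hf : ∀ i, ContDiff ℝ 2 (fun x => f x i)) (p : m × Fin L) :
    Differentiable ℝ (fun θ => vgrad f θ p) :=
  (((hf p.1).fderiv_right (m := 1) (by norm_num)).clm_apply contDiff_const).differentiable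
    one_ne_zero

lemma mgrad_const (C : Matrix m n ℝ) : mgrad (fun _ => C) θ = 0 := by
  ext
  simp [mgrad]

lemma mgrad_sub_const (A : (Fin L → ℝ) → Matrix m n ℝ) (C : Matrix m n ℝ) :
    mgrad (fun x => A x - C) θ = mgrad A θ := by
  ext
  simp [mgrad, fderiv_sub_const]

lemma differentiableAt_diagonal_apply [DecidableEq m] {β : m → (Fin L → ℝ) → ℝ}
    (hβ : ∀ i, DifferentiableAt ℝ (β i) θ) (i j : m) :
    DifferentiableAt ℝ (fun x => diagonal (fun k => β k x) i j) θ := by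
  simp only [diagonal_apply]
  split_ifs
  exacts [hβ i, differentiableAt_const 0]

variable [Fintype n]

lemma differentiableAt_mulVec_apply {A : (Fin L → ℝ) → Matrix m n ℝ} {f : (Fin L → ℝ) → n → ℝ}
    (hA : ∀ i j, DifferentiableAt ℝ (fun x => A x i j) θ)
    (hf : ∀ j, DifferentiableAt ℝ (fun x => f x j) θ) (i : m) :
    DifferentiableAt ℝ (fun x => (A x *ᵥ f x) i) θ := by
  simp only [mulVec, dotProduct]
  fun_prop

lemma vgrad_mulVec {A : (Fin L → ℝ) → Matrix m n ℝ} {f : (Fin L → ℝ) → n → ℝ}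
    (hA : ∀ i j, DifferentiableAt ℝ (fun x => A x i j) θ)
    (hf : ∀ j, DifferentiableAt ℝ (fun x => f x j) θ) :
    vgrad (fun x => A x *ᵥ f x) θ
      = mgrad A θ *ᵥ f θ + (A θ ⊗ₖ (1 : Matrix (Fin L) (Fin L) ℝ)) *ᵥ vgrad f θ := by
  classical
  ext ⟨i, k⟩
  simp only [vgrad, mgrad, mulVec, dotProduct]
  rw [fderiv_fun_sum fun j _ => (hA i j).fun_mul (hf j)]
  simp [fderiv_fun_mul (hA _ _) (hf _), mulVec, dotProduct, vgrad, Fintype.sum_prod_type,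
    Matrix.one_apply, Finset.sum_add_distrib, mul_comm, add_comm]

lemma mgrad_const_mul (M : Matrix l n ℝ) {A : (Fin L → ℝ) → Matrix n m ℝ}
    (hA : ∀ i j, DifferentiableAt ℝ (fun x => A x i j) θ) :
    mgrad (fun x => M * A x) θ = (M ⊗ₖ (1 : Matrix (Fin L) (Fin L) ℝ)) * mgrad A θ := by
  classical
  ext ⟨i, k⟩ j
  simp only [mgrad, Matrix.mul_apply, of_apply]
  rw [fderiv_fun_sum fun j' _ => (hA j' j).const_mul (M i j')]
  simp [fderiv_const_mul (hA _ _), Fintype.sum_prod_type, Matrix.one_apply]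

lemma mgrad_idKronRowVec (d : ℕ) : mgrad (idKronRowVec d) θ = 1 := by
  classical
  ext ⟨j, k⟩ ⟨j', k'⟩
  have hcoord : fderiv ℝ (fun x : Fin L → ℝ => x k') θ = ContinuousLinearMap.proj k' :=
    (ContinuousLinearMap.proj (R := ℝ) (φ := fun _ : Fin L => ℝ) k').fderiv
  by_cases h : j = j' <;> simp [mgrad, idKronRowVec, h, Matrix.one_apply, hcoord, Pi.single_apply,
    eq_comm]

end StackedGradient

section TransportRhs

variable {L d : ℕ}

lemma idKronRowVec_zero : idKronRowVec d (0 : Fin L → ℝ) = 0 := by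
  ext
  simp [idKronRowVec]

lemma differentiableAt_idKronRowVec_apply (θ : Fin L → ℝ) (j : Fin d) (p : Fin d × Fin L) :
    DifferentiableAt ℝ (fun x => idKronRowVec d x j p) θ := by
  simp only [idKronRowVec, of_apply]
  split_ifs <;> fun_prop

lemma vgrad_transportRhs_zero (Λ Q : Matrix (Fin d) (Fin d) ℝ)
    {B : (Fin L → ℝ) → Matrix (Fin d) (Fin d) ℝ} {π : (Fin L → ℝ) → Fin d → ℝ}
    {w : (Fin L → ℝ) → Fin d × Fin L → ℝ}
    (hB : ∀ i j, DifferentiableAt ℝ (fun θ => B θ i j) 0) (hB₀ : B 0 = 1)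
    (hπ : ∀ j, DifferentiableAt ℝ (fun θ => π θ j) 0)
    (hw : ∀ p, DifferentiableAt ℝ (fun θ => w θ p) 0) :
    vgrad (fun θ => (Λ * (B θ - 1)) *ᵥ π θ + Q *ᵥ π θ - idKronRowVec d θ *ᵥ w θ) 0
      = ((Λ ⊗ₖ (1 : Matrix (Fin L) (Fin L) ℝ)) * mgrad B 0) *ᵥ π 0
        + (Q ⊗ₖ (1 : Matrix (Fin L) (Fin L) ℝ)) *ᵥ vgrad π 0 - w 0 := by
  have hB₁ : ∀ i j, DifferentiableAt ℝ (fun θ => (B θ - 1) i j) 0 := fun i j => by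
    simpa only [Matrix.sub_apply] using (hB i j).sub_const ((1 : Matrix (Fin d) (Fin d) ℝ) i j)
  have hΛB : ∀ i j, DifferentiableAt ℝ (fun θ => (Λ * (B θ - 1)) i j) 0 := fun i j => by
    simp only [mul_apply]
    exact .fun_sum fun k _ => (hB₁ k j).const_mul (Λ i k)
  have hQ : ∀ i j, DifferentiableAt ℝ (fun _ : Fin L → ℝ => Q i j) 0 :=
    fun _ _ => differentiableAt_const _
  rw [vgrad_sub (f := fun θ => (Λ * (B θ - 1)) *ᵥ π θ + Q *ᵥ π θ)
      (fun i => (differentiableAt_mulVec_apply hΛB hπ i).add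
        (differentiableAt_mulVec_apply hQ hπ i))
      (differentiableAt_mulVec_apply (differentiableAt_idKronRowVec_apply 0) hw),
    vgrad_add (differentiableAt_mulVec_apply hΛB hπ) (differentiableAt_mulVec_apply hQ hπ),
    vgrad_mulVec hΛB hπ, vgrad_mulVec hQ hπ,
    vgrad_mulVec (differentiableAt_idKronRowVec_apply 0) hw,
    mgrad_const_mul Λ hB₁, mgrad_sub_const, mgrad_const, mgrad_idKronRowVec, hB₀,
    idKronRowVec_zero]
  simp

end TransportRhs

theorem first_moment_ode_general {d L : ℕ}
    (Q : Matrix (Fin d) (Fin d) ℝ)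
    (β : Fin d → (Fin L → ℝ) → ℝ)
    (hβ : ∀ j, ContDiff ℝ 2 (β j)) (hβ0 : ∀ j, β j 0 = 1)
    (Λ : Matrix (Fin d) (Fin d) ℝ)
    (Bm : (Fin L → ℝ) → Matrix (Fin d) (Fin d) ℝ)
    (hBm : Bm = fun θ => Matrix.diagonal fun j => β j θ)
    (R : Matrix (Fin d × Fin L) (Fin d × Fin L) ℝ)
    (Ξ : (Fin L → ℝ) → ℝ → Fin d → ℝ)
    (hΞ : ContDiff ℝ 2 fun p : (Fin L → ℝ) × ℝ => Ξ p.1 p.2)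
    -- `∇_θ Ξ(θ, s)`, as a vector indexed by `Fin d × Fin L`
    (gradΞ : (Fin L → ℝ) → ℝ → Fin d × Fin L → ℝ)
    (hgradΞ : gradΞ = fun θ s p => fderiv ℝ (fun x => Ξ x s p.1) θ (Pi.single p.2 1))
    -- the PDE, in `t ∈ [0,∞)`
    (hPDE : ∀ θ : Fin L → ℝ, ∀ s ∈ Set.Ici (0 : ℝ),
      HasDerivWithinAt (fun u => Ξ θ u)
        ((Λ * (Bm θ - 1)) *ᵥ Ξ θ s + Qᵀ *ᵥ Ξ θ s
          - idKronRowVec d θ *ᵥ (Rᵀ *ᵥ gradΞ θ s))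
        (Set.Ici 0) s)
    (z₁ : ℝ → Fin d × Fin L → ℝ) (hz₁ : z₁ = fun s => gradΞ 0 s) :
    ∀ s ∈ Set.Ici (0 : ℝ),
      HasDerivWithinAt z₁
        (((Λ ⊗ₖ (1 : Matrix (Fin L) (Fin L) ℝ)) * mgrad Bm 0) *ᵥ Ξ 0 s
          + ((Qᵀ ⊗ₖ (1 : Matrix (Fin L) (Fin L) ℝ)) - Rᵀ) *ᵥ z₁ s)
        (Set.Ici 0) s := by
  obtain rfl : gradΞ = fun θ s => vgrad (Ξ · s) θ := hgradΞ
  subst hz₁ hBm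
  intro s hs
  have hΞj (j : Fin d) : ContDiff ℝ 2 fun p : (Fin L → ℝ) × ℝ => Ξ p.1 p.2 j :=
    contDiff_pi.mp hΞ j
  have hslice (j : Fin d) : ContDiff ℝ 2 fun θ => Ξ θ s j :=
    (hΞj j).comp (contDiff_prodMk_left s)
  have hB := differentiableAt_diagonal_apply fun j => (hβ j).differentiable two_ne_zero 0
  have hB₀ : diagonal (fun j => β j 0) = 1 := by simp [hβ0]
  have hw : ∀ p, DifferentiableAt ℝ (fun θ => (Rᵀ *ᵥ vgrad (Ξ · s) θ) p) 0 :=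
    differentiableAt_mulVec_apply (fun _ _ => differentiableAt_const _)
      fun p => differentiable_vgrad_apply hslice p 0
  have htime : (fun θ j => deriv (fun u => Ξ θ u j) s)
      = fun θ => (Λ * (diagonal (fun j => β j θ) - 1)) *ᵥ Ξ θ s + Qᵀ *ᵥ Ξ θ s
          - idKronRowVec d θ *ᵥ (Rᵀ *ᵥ vgrad (Ξ · s) θ) := by
    funext θ j
    have hdiff : DifferentiableAt ℝ (fun u => Ξ θ u j) s :=
      ((hΞj j).comp (contDiff_prodMk_right θ)).differentiable two_ne_zero s
    exact (uniqueDiffOn_Ici 0 s hs).eq_deriv _ hdiff.hasDerivAt.hasDerivWithinAt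
      (hasDerivWithinAt_pi.1 (hPDE θ s hs) j)
  have hmixed : HasDerivAt (fun u => vgrad (Ξ · u) 0)
      (vgrad (fun θ j => deriv (fun u => Ξ θ u j) s) 0) s :=
    hasDerivAt_pi.2 fun p => hasDerivAt_fderiv_comp_prodMk (hΞj p.1) 0 (Pi.single p.2 1) s
  rw [htime, vgrad_transportRhs_zero Λ Qᵀ hB hB₀
    (fun j => (hslice j).differentiable two_ne_zero 0) hw] at hmixed
  simpa [sub_mulVec, add_sub_assoc] using hmixed.hasDerivWithinAt

/-- **First-moment ODE from the transform PDE.** Suppose `Ξ : ℝ^L × [0,∞) → ℝ^d` is `C²` and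
satisfies `∂_t Ξ(θ,t) = Λ(B(θ) - I_d)Ξ(θ,t) + Qᵀ Ξ(θ,t) - (I_d ⊗ θᵀ) Rᵀ ∇_θ Ξ(θ,t)`, where
`Λ = diag(λ)`, `B(θ) = diag(β_j(θ))`, `Q` is a Markov generator and `R` is the block-diagonal
matrix with blocks `R_1,…,R_d`. Then `z₁(t) := ∇_θ Ξ(0,t)` satisfies
`z₁'(t) = (Λ ⊗ I_L) ∇B(0) π(t) + ((Qᵀ ⊗ I_L) - Rᵀ) z₁(t)` with `π(t) = Ξ(0,t)`. -/
theorem first_moment_ode {d L : ℕ}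
    (Q : Matrix (Fin d) (Fin d) ℝ)
    (hQoff : ∀ i j, i ≠ j → 0 ≤ Q i j) (hQrow : ∀ i, ∑ j, Q i j = 0)
    (lam : Fin d → ℝ) (hlam : ∀ j, 0 ≤ lam j)
    (β : Fin d → (Fin L → ℝ) → ℝ)
    (hβ : ∀ j, ContDiff ℝ 2 (β j)) (hβ0 : ∀ j, β j 0 = 1)
    (Λ : Matrix (Fin d) (Fin d) ℝ) (hΛ : Λ = Matrix.diagonal lam)
    (Bm : (Fin L → ℝ) → Matrix (Fin d) (Fin d) ℝ)
    (hBm : Bm = fun θ => Matrix.diagonal fun j => β j θ)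
    (Rb : Fin d → Matrix (Fin L) (Fin L) ℝ)
    (R : Matrix (Fin d × Fin L) (Fin d × Fin L) ℝ)
    (hR : R = Matrix.of fun p q => if p.1 = q.1 then Rb p.1 p.2 q.2 else 0)
    (Ξ : (Fin L → ℝ) → ℝ → Fin d → ℝ)
    (hΞ : ContDiff ℝ 2 fun p : (Fin L → ℝ) × ℝ => Ξ p.1 p.2)
    -- `∇_θ Ξ(θ, s)`, as a vector indexed by `Fin d × Fin L`
    (gradΞ : (Fin L → ℝ) → ℝ → Fin d × Fin L → ℝ)
    (hgradΞ : gradΞ = fun θ s p => fderiv ℝ (fun x => Ξ x s p.1) θ (Pi.single p.2 1))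
    -- the PDE, in `t ∈ [0,∞)`
    (hPDE : ∀ θ : Fin L → ℝ, ∀ s ∈ Set.Ici (0 : ℝ),
      HasDerivWithinAt (fun u => Ξ θ u)
        ((Λ * (Bm θ - 1)) *ᵥ Ξ θ s + Qᵀ *ᵥ Ξ θ s
          - idKronRowVec d θ *ᵥ (Rᵀ *ᵥ gradΞ θ s))
        (Set.Ici 0) s)
    (z₁ : ℝ → Fin d × Fin L → ℝ) (hz₁ : z₁ = fun s => gradΞ 0 s) :
    ∀ s ∈ Set.Ici (0 : ℝ),
      HasDerivWithinAt z₁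
        (((Λ ⊗ₖ (1 : Matrix (Fin L) (Fin L) ℝ)) * mgrad Bm 0) *ᵥ Ξ 0 s
          + ((Qᵀ ⊗ₖ (1 : Matrix (Fin L) (Fin L) ℝ)) - Rᵀ) *ᵥ z₁ s)
        (Set.Ici 0) s :=
  first_moment_ode_general Q β hβ hβ0 Λ Bm hBm R Ξ hΞ gradΞ hgradΞ hPDE z₁ hz₁

end
end
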